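/- Let f : 2^N → ℝ be a submodular function, let A, B ⊆ N, and let A(p) and B(q) be independently sampled random subsets of A and B respectively, where each element of A appears in A(p) with probability p independently and each element of B appears in B(q) with probability q independently. Then E[f(A(p) ∪ B(q))] ≥ (1-p)(1-q)·f(∅) + p(1-q)·f(A) + (1-p)q·f(B) + pq·f(A ∪ B). -/

import Mathlib

/-!
Conditioning on whether a fixed element `x` is sampled, an induction on `A` gives the
one-set bound `E[f(A(p))] ≥ (1-p) f(∅) + p f(A)`: the only new ingredient in the induction
step is submodularity on the disjoint pair `A, {x}`. The two-set bound follows by applying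
the one-set bound first to `T ↦ f(S ∪ T)` for each sample `S` of `A`, then to `f` and to
`S ↦ f(S ∪ B)`, all of which are again submodular.
-/

namespace Finset

variable {α : Type*}

def IsSubmodular [DecidableEq α] (f : Finset α → ℝ) : Prop :=
  ∀ S T : Finset α, f (S ∪ T) + f (S ∩ T) ≤ f S + f T

/-- The expectation of `g (A(p))`, where `A(p)` contains each element of `A` independently
with probability `p`. -/
def bernoulliExpect (A : Finset α) (p : ℝ) (g : Finset α → ℝ) : ℝ :=
  ∑ S ∈ A.powerset, p ^ S.card * (1 - p) ^ (A.card - S.card) * g S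

section bernoulliExpect

variable {A : Finset α} {p : ℝ}

theorem bernoulliExpect_add (g h : Finset α → ℝ) :
    bernoulliExpect A p (fun S => g S + h S) = bernoulliExpect A p g + bernoulliExpect A p h := by
  simp only [bernoulliExpect, mul_add, sum_add_distrib]

theorem bernoulliExpect_const_mul (c : ℝ) (g : Finset α → ℝ) :
    bernoulliExpect A p (fun S => c * g S) = c * bernoulliExpect A p g := by
  simp only [bernoulliExpect, mul_sum]
  exact sum_congr rfl fun _ _ => by ring

theorem bernoulliExpect_mono (hp : p ∈ Set.Icc (0 : ℝ) 1) {g h : Finset α → ℝ}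
    (hgh : ∀ S ⊆ A, g S ≤ h S) : bernoulliExpect A p g ≤ bernoulliExpect A p h :=
  sum_le_sum fun S hS => mul_le_mul_of_nonneg_left (hgh S (mem_powerset.mp hS))
    (mul_nonneg (pow_nonneg hp.1 _) (pow_nonneg (sub_nonneg.mpr hp.2) _))

theorem bernoulliExpect_insert [DecidableEq α] {x : α} (hx : x ∉ A) (g : Finset α → ℝ) :
    bernoulliExpect (insert x A) p g =
      (1 - p) * bernoulliExpect A p g + p * bernoulliExpect A p (fun S => g (insert x S)) := by
  simp only [bernoulliExpect, sum_powerset_insert hx, mul_sum, card_insert_of_notMem hx]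
  congr 1 <;> refine sum_congr rfl fun S hS => ?_
  · rw [Nat.sub_add_comm (card_le_card (mem_powerset.mp hS)), pow_succ]
    ring
  · rw [card_insert_of_notMem fun hxS => hx (mem_powerset.mp hS hxS), Nat.add_sub_add_right,
      pow_succ]
    ring

end bernoulliExpect

namespace IsSubmodular

variable [DecidableEq α] {f : Finset α → ℝ}

theorem comp_union_left (hf : IsSubmodular f) (S : Finset α) :
    IsSubmodular fun T => f (S ∪ T) := by
  intro T₁ T₂
  dsimp only
  rw [union_union_distrib_left, union_inter_distrib_left]
  exact hf (S ∪ T₁) (S ∪ T₂)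

theorem comp_union_right (hf : IsSubmodular f) (S : Finset α) :
    IsSubmodular fun T => f (T ∪ S) := by
  intro T₁ T₂
  dsimp only
  rw [union_union_distrib_right, inter_union_distrib_right]
  exact hf (T₁ ∪ S) (T₂ ∪ S)

theorem le_bernoulliExpect (hf : IsSubmodular f) (A : Finset α) {p : ℝ}
    (hp : p ∈ Set.Icc (0 : ℝ) 1) : (1 - p) * f ∅ + p * f A ≤ bernoulliExpect A p f := by
  induction A using Finset.induction_on generalizing f with
  | empty => simp [bernoulliExpect]; linarith
  | @insert x A hx ih =>
    have hA := ih hf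
    have hxA := ih (hf.comp_union_left {x})
    have hdisj := hf A {x}
    simp only [union_empty, ← insert_eq] at hxA
    rw [union_comm, ← insert_eq, inter_singleton_of_notMem hx] at hdisj
    rw [bernoulliExpect_insert hx]
    have hq : 0 ≤ 1 - p := sub_nonneg.mpr hp.2
    linarith [mul_le_mul_of_nonneg_left hA hq, mul_le_mul_of_nonneg_left hxA hp.1,
      mul_le_mul_of_nonneg_left hdisj (mul_nonneg hp.1 hq)]

end IsSubmodular

end Finset

open Finset in
theorem stmt_4_general {α : Type*} [DecidableEq α]
    (f : Finset α → ℝ)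
    (hsub : ∀ S T : Finset α, f (S ∪ T) + f (S ∩ T) ≤ f S + f T)
    (A B : Finset α) (p q : ℝ)
    (hp : p ∈ Set.Icc (0:ℝ) 1) (hq : q ∈ Set.Icc (0:ℝ) 1) :
    ∑ S ∈ A.powerset, ∑ T ∈ B.powerset,
        (p ^ S.card * (1 - p) ^ (A.card - S.card)) *
          (q ^ T.card * (1 - q) ^ (B.card - T.card)) * f (S ∪ T) ≥
      (1 - p) * (1 - q) * f ∅ + p * (1 - q) * f A + (1 - p) * q * f B +
        p * q * f (A ∪ B) := by
  have hf : IsSubmodular f := hsub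
  have hA := hf.le_bernoulliExpect A hp
  have hAB := (hf.comp_union_right B).le_bernoulliExpect A hp
  simp only [empty_union] at hAB
  calc (1 - p) * (1 - q) * f ∅ + p * (1 - q) * f A + (1 - p) * q * f B + p * q * f (A ∪ B)
      ≤ (1 - q) * bernoulliExpect A p f + q * bernoulliExpect A p (fun S => f (S ∪ B)) := by
        linarith [mul_le_mul_of_nonneg_left hA (sub_nonneg.mpr hq.2),
          mul_le_mul_of_nonneg_left hAB hq.1]
    _ = bernoulliExpect A p (fun S => (1 - q) * f S + q * f (S ∪ B)) := by
        rw [bernoulliExpect_add, bernoulliExpect_const_mul, bernoulliExpect_const_mul]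
    _ ≤ bernoulliExpect A p (fun S => bernoulliExpect B q (fun T => f (S ∪ T))) :=
        bernoulliExpect_mono hp fun S _ => by
          simpa only [union_empty] using (hf.comp_union_left S).le_bernoulliExpect B hq
    _ = _ := by
        simp only [bernoulliExpect, mul_sum]
        exact sum_congr rfl fun _ _ => sum_congr rfl fun _ _ => by ring

/-- Lemma 2.3 of Feige–Mirrokni–Vondrák: for a submodular `f` and sets
`A, B`, sampling each element of `A` independently with probability `p` and each element
of `B` independently with probability `q` (all samples mutually independent),
`E[f(A(p) ∪ B(q))] ≥ (1-p)(1-q)f(∅) + p(1-q)f(A) + (1-p)q f(B) + pq f(A ∪ B)`.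
The expectation is written out explicitly as a sum over the possible sampled subsets. -/
theorem stmt_4 {α : Type*} [Fintype α] [DecidableEq α]
    (f : Finset α → ℝ)
    (hsub : ∀ S T : Finset α, f (S ∪ T) + f (S ∩ T) ≤ f S + f T)
    (A B : Finset α) (p q : ℝ)
    (hp : p ∈ Set.Icc (0:ℝ) 1) (hq : q ∈ Set.Icc (0:ℝ) 1) :
    ∑ S ∈ A.powerset, ∑ T ∈ B.powerset,
        (p ^ S.card * (1 - p) ^ (A.card - S.card)) *
          (q ^ T.card * (1 - q) ^ (B.card - T.card)) * f (S ∪ T) ≥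
      (1 - p) * (1 - q) * f ∅ + p * (1 - q) * f A + (1 - p) * q * f B +
        p * q * f (A ∪ B) :=
  stmt_4_general f hsub A B p q hp hq
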